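/- If Γ ⊆ Ω(G) is nonempty and |⋃Γ| + |⋂Γ| = 2α(G), then |⋃Γ| − |⋂Γ| = 2μ(G[⋃Γ]), where μ denotes the maximum matching number of the induced subgraph. -/

import Mathlib

open Set

variable {V : Type*}

/-- `S` is an independent set of `G`. -/
def IndepSet (G : SimpleGraph V) (S : Set V) : Prop :=
  ∀ x ∈ S, ∀ y ∈ S, ¬ G.Adj x y

/-- The independence number `α(G)`. -/
noncomputable def alpha (G : SimpleGraph V) : ℕ :=
  sSup {n | ∃ S : Set V, IndepSet G S ∧ S.ncard = n}

/-- `S` is a maximum independent set of `G`. -/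
def MaxIndep (G : SimpleGraph V) (S : Set V) : Prop :=
  IndepSet G S ∧ S.ncard = alpha G

/-- `Ω(G)`, the family of all maximum independent sets. -/
def Omega (G : SimpleGraph V) : Set (Set V) := {S | MaxIndep G S}

/-- `core(G)`, the intersection of all maximum independent sets. -/
def core (G : SimpleGraph V) : Set V := ⋂₀ Omega G

/-- `corona(G)`, the union of all maximum independent sets. -/
def corona (G : SimpleGraph V) : Set V := ⋃₀ Omega G

/-- The matching number `μ(G)`. -/
noncomputable def matchNum (G : SimpleGraph V) : ℕ :=
  sSup {n | ∃ M : G.Subgraph, M.IsMatching ∧ M.edgeSet.ncard = n}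

/-- A matching from `X` into `Y`: an injection `f` on `X` into `Y` such that each `x ∈ X`
is adjacent to `f x` and the edges `{x, f x}` are pairwise disjoint. -/
def MatchingFrom (G : SimpleGraph V) (X Y : Set V) : Prop :=
  ∃ f : V → V, Set.InjOn f X ∧ (∀ x ∈ X, f x ∈ Y ∧ G.Adj x (f x)) ∧
    ∀ x ∈ X, ∀ y ∈ X, x ≠ y → f x ≠ y

/-!
Fix `S ∈ Γ`; it is a maximum independent set contained in `U = ⋃₀ Γ`. Every edge of a matching
of `G[U]` has an end in `U \ S`, so `μ(G[U]) ≤ |U| - α(G)`. Conversely, for a maximum independent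
set `A` and `X ⊆ S \ A`, replacing the neighbours of `X` in `A` by `X` gives an independent set,
so `X` has at least `|X|` neighbours in `A \ S`. Splitting `X` along the members of `Γ` turns this
into Hall's condition for matching `S \ ⋂₀ Γ` into `U \ S`, whence `μ(G[U]) ≥ α(G) - |⋂₀ Γ|`.
The hypothesis says exactly that the two bounds coincide.
-/

open SimpleGraph

namespace SimpleGraph.Subgraph

variable {W : Type*} {H : SimpleGraph W} {M : H.Subgraph}

lemma IsMatching.eq_of_mem_edgeSet_of_mem (hM : M.IsMatching) {v : W} {e₁ e₂ : Sym2 W}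
    (he₁ : e₁ ∈ M.edgeSet) (he₂ : e₂ ∈ M.edgeSet) (hv₁ : v ∈ e₁) (hv₂ : v ∈ e₂) : e₁ = e₂ := by
  obtain ⟨w₁, rfl⟩ := Sym2.mem_iff_exists.mp hv₁
  obtain ⟨w₂, rfl⟩ := Sym2.mem_iff_exists.mp hv₂
  rw [hM.eq_of_adj_left (M.mem_edgeSet.mp he₁) he₂]

lemma IsMatching.ncard_edgeSet_add_ncard_le [Finite W] (hM : M.IsMatching) {S : Set W}
    (hS : IndepSet H S) : M.edgeSet.ncard + S.ncard ≤ Nat.card W := by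
  have hcover (e : M.edgeSet) : ∃ v : ↥Sᶜ, ↑v ∈ (e : Sym2 W) := by
    obtain ⟨e, he⟩ := e
    induction e using Sym2.ind with | _ a b =>
    by_contra! h
    exact hS a (not_not.mp (h ⟨a, ·⟩ (Sym2.mem_mk_left a b)))
      b (not_not.mp (h ⟨b, ·⟩ (Sym2.mem_mk_right a b))) (M.adj_sub he)
  choose φ hφ using hcover
  have hφ_inj : φ.Injective := fun e₁ e₂ h =>
    Subtype.ext <| hM.eq_of_mem_edgeSet_of_mem e₁.2 e₂.2 (hφ e₁) (h ▸ hφ e₂)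
  calc M.edgeSet.ncard + S.ncard ≤ Sᶜ.ncard + S.ncard := by
        gcongr
        simpa only [Nat.card_coe_set_eq] using Nat.card_le_card_of_injective φ hφ_inj
    _ = Nat.card W := ncard_compl_add_ncard S

lemma exists_isMatching_ncard_edgeSet_eq {ι : Type*} {a b : ι → W} (ha : a.Injective)
    (hb : b.Injective) (hab : ∀ i j, a i ≠ b j) (hadj : ∀ i, H.Adj (a i) (b i)) :
    ∃ M : H.Subgraph, M.IsMatching ∧ M.edgeSet.ncard = Nat.card ι := by
  refine ⟨⨆ i, H.subgraphOfAdj (hadj i), IsMatching.iSup (fun i => .subgraphOfAdj _) ?_, ?_⟩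
  · intro i j hij
    simp only [support_subgraphOfAdj, disjoint_insert_left, disjoint_insert_right,
      disjoint_singleton, mem_insert_iff, mem_singleton_iff, not_or]
    exact ⟨⟨ha.ne hij.symm, hab j i⟩, hab i j, hb.ne hij⟩
  · have hedge : (fun i => s(a i, b i)).Injective := fun i j h => by
      rcases Sym2.eq_iff.mp h with ⟨h, -⟩ | ⟨h, -⟩
      exacts [ha h, absurd h (hab i j)]
    simp only [edgeSet_iSup, edgeSet_subgraphOfAdj, ← ncard_range_of_injective hedge]
    congr 1
    ext e
    simp [eq_comm]

end SimpleGraph.Subgraph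

lemma bddAbove_ncard_edgeSet_isMatching [Finite V] (G : SimpleGraph V) :
    BddAbove {n | ∃ M : G.Subgraph, M.IsMatching ∧ M.edgeSet.ncard = n} :=
  ⟨Nat.card V, by
    rintro _ ⟨M, hM, rfl⟩
    simpa using hM.ncard_edgeSet_add_ncard_le (S := ∅) (by simp [IndepSet])⟩

lemma SimpleGraph.Subgraph.IsMatching.ncard_edgeSet_le_matchNum [Finite V] {G : SimpleGraph V}
    {M : G.Subgraph} (hM : M.IsMatching) : M.edgeSet.ncard ≤ matchNum G :=
  le_csSup (bddAbove_ncard_edgeSet_isMatching G) ⟨M, hM, rfl⟩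

lemma exists_isMatching_ncard_edgeSet_eq_matchNum [Finite V] (G : SimpleGraph V) :
    ∃ M : G.Subgraph, M.IsMatching ∧ M.edgeSet.ncard = matchNum G := by
  refine Nat.sSup_mem ?_ (bddAbove_ncard_edgeSet_isMatching G)
  exact ⟨0, ⊥, fun _ hv => hv.elim, by simp⟩

lemma matchNum_add_ncard_le [Finite V] {G : SimpleGraph V} {S : Set V} (hS : IndepSet G S) :
    matchNum G + S.ncard ≤ Nat.card V := by
  obtain ⟨M, hM, hcard⟩ := exists_isMatching_ncard_edgeSet_eq_matchNum G
  exact hcard ▸ hM.ncard_edgeSet_add_ncard_le hS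

lemma matchNum_induce_add_ncard_le [Finite V] {G : SimpleGraph V} {U S : Set V} (hSU : S ⊆ U)
    (hS : IndepSet G S) : matchNum (G.induce U) + S.ncard ≤ U.ncard := by
  have hS' : IndepSet (G.induce U) (Subtype.val ⁻¹' S) := fun x hx y hy => hS x hx y hy
  have := matchNum_add_ncard_le hS'
  rwa [ncard_preimage_of_injective_subset_range Subtype.val_injective (by rwa [Subtype.range_coe]),
    Nat.card_coe_set_eq] at this

lemma ncard_le_matchNum_induce [Finite V] {G : SimpleGraph V} {U D : Set V} (hDU : D ⊆ U)
    (f : D → V) (hf : f.Injective) (hfU : ∀ x, f x ∈ U \ D) (hadj : ∀ x : D, G.Adj x (f x)) :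
    D.ncard ≤ matchNum (G.induce U) := by
  obtain ⟨M, hM, hcard⟩ := Subgraph.exists_isMatching_ncard_edgeSet_eq (H := G.induce U) (ι := D)
    (a := fun x => ⟨x, hDU x.2⟩) (b := fun x => ⟨f x, (hfU x).1⟩)
    (fun _ _ h => Subtype.ext (Subtype.mk.inj h)) (fun _ _ h => hf (Subtype.mk.inj h))
    (fun i j h => (hfU j).2 (Subtype.mk.inj h ▸ i.2)) hadj
  rw [← Nat.card_coe_set_eq, ← hcard]
  exact hM.ncard_edgeSet_le_matchNum

lemma IndepSet.ncard_le_alpha [Finite V] {G : SimpleGraph V} {S : Set V} (hS : IndepSet G S) :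
    S.ncard ≤ alpha G :=
  le_csSup ⟨Nat.card V, by rintro _ ⟨T, -, rfl⟩; exact ncard_le_card T⟩ ⟨S, hS, rfl⟩

lemma MaxIndep.ncard_le_ncard_neighbors_inter_sdiff [Finite V] {G : SimpleGraph V}
    {A S X : Set V} (hA : MaxIndep G A) (hS : IndepSet G S) (hX : X ⊆ S \ A) :
    X.ncard ≤ ({y | ∃ x ∈ X, G.Adj x y} ∩ (A \ S)).ncard := by
  set N := {y | ∃ x ∈ X, G.Adj x y}
  have hXS : X ⊆ S := fun x hx => (hX hx).1
  have hswap : IndepSet G ((A \ N) ∪ X) := by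
    rintro a (⟨haA, haN⟩ | haX) b (⟨hbA, hbN⟩ | hbX) hab
    · exact hA.1 a haA b hbA hab
    · exact haN ⟨b, hbX, hab.symm⟩
    · exact hbN ⟨a, haX, hab⟩
    · exact hS a (hXS haX) b (hXS hbX) hab
  have hdisj : Disjoint (A \ N) X := disjoint_right.mpr fun x hx hxA => (hX hx).2 hxA.1
  have hAN : A ∩ N ⊆ N ∩ (A \ S) := by
    rintro y ⟨hyA, x, hx, hxy⟩
    exact ⟨⟨x, hx, hxy⟩, hyA, fun hyS => hS x (hXS hx) y hyS hxy⟩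
  have h₁ := ncard_union_eq hdisj ▸ hswap.ncard_le_alpha
  have h₂ := ncard_inter_add_ncard_sdiff_eq_ncard A N
  have h₃ := ncard_le_ncard hAN
  have h₄ := hA.2
  omega

lemma ncard_le_ncard_neighbors_inter_sUnion_sdiff [Finite V] {G : SimpleGraph V}
    {Γ : Set (Set V)} {S : Set V} (hΓ : Γ ⊆ Omega G) (hS : IndepSet G S) {X : Set V}
    (hX : X ⊆ S \ ⋂₀ Γ) : X.ncard ≤ ({y | ∃ x ∈ X, G.Adj x y} ∩ (⋃₀ Γ \ S)).ncard := by
  induction Γ, Γ.toFinite using Set.Finite.induction_on generalizing X with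
  | empty =>
    rw [subset_eq_empty hX (by simp)]
    simp
  | @insert A Λ _ _ ih =>
    have hA : MaxIndep G A := hΓ (mem_insert A Λ)
    have h₁ := hA.ncard_le_ncard_neighbors_inter_sdiff hS (X := X \ A)
      fun x hx => ⟨(hX hx.1).1, hx.2⟩
    have h₂ := ih ((subset_insert A Λ).trans hΓ) (X := X ∩ A)
      fun x hx => ⟨(hX hx.1).1, fun hxΛ => (hX hx.1).2 (by simp [hx.2, hxΛ])⟩
    set N₁ := {y | ∃ x ∈ X \ A, G.Adj x y} ∩ (A \ S)
    set N₂ := {y | ∃ x ∈ X ∩ A, G.Adj x y} ∩ (⋃₀ Λ \ S)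
    have hdisj : Disjoint N₁ N₂ := disjoint_left.mpr fun y ⟨_, hyA, _⟩ ⟨⟨x, hx, hxy⟩, _⟩ =>
      hA.1 x hx.2 y hyA hxy
    have hsub : N₁ ∪ N₂ ⊆ {y | ∃ x ∈ X, G.Adj x y} ∩ (⋃₀ insert A Λ \ S) := by
      rintro y (⟨⟨x, hx, hxy⟩, hyA, hyS⟩ | ⟨⟨x, hx, hxy⟩, hyΛ, hyS⟩)
      · exact ⟨⟨x, hx.1, hxy⟩, by simp [hyA], hyS⟩
      · exact ⟨⟨x, hx.1, hxy⟩, sUnion_mono (subset_insert A Λ) hyΛ, hyS⟩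
    have h₃ := ncard_inter_add_ncard_sdiff_eq_ncard X A
    have h₄ := ncard_union_eq hdisj
    have h₅ := ncard_le_ncard hsub
    omega

lemma exists_injective_adj_mem_sUnion_sdiff [Finite V] {G : SimpleGraph V} {Γ : Set (Set V)}
    {S : Set V} (hΓ : Γ ⊆ Omega G) (hS : IndepSet G S) :
    ∃ f : ↥(S \ ⋂₀ Γ) → V, f.Injective ∧ ∀ x, f x ∈ ⋃₀ Γ \ S ∧ G.Adj x (f x) := by
  classical
  have := Fintype.ofFinite V
  refine (Fintype.all_card_le_filter_rel_iff_exists_injective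
    fun (x : ↥(S \ ⋂₀ Γ)) y => y ∈ ⋃₀ Γ \ S ∧ G.Adj x y).mp fun A => ?_
  have hHall := ncard_le_ncard_neighbors_inter_sUnion_sdiff hΓ hS
    (X := Subtype.val '' (A : Set ↥(S \ ⋂₀ Γ))) (by rintro _ ⟨x, -, rfl⟩; exact x.2)
  rw [ncard_image_of_injective _ Subtype.val_injective, ncard_coe_finset] at hHall
  convert hHall using 1
  rw [← ncard_coe_finset, Finset.coe_filter]
  congr 1
  ext y
  simp only [Finset.mem_univ, true_and, mem_ofPred_eq, mem_inter_iff, exists_mem_image,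
    Finset.mem_coe]
  tauto

theorem stmt_15 [Fintype V] (G : SimpleGraph V)
    (Γ : Set (Set V)) (hΓ : Γ ⊆ Omega G) (hne : Γ.Nonempty)
    (h : (⋃₀ Γ).ncard + (⋂₀ Γ).ncard = 2 * alpha G) :
    (⋃₀ Γ).ncard - (⋂₀ Γ).ncard = 2 * matchNum (G.induce (⋃₀ Γ)) := by
  obtain ⟨S, hSΓ⟩ := hne
  have hS : MaxIndep G S := hΓ hSΓ
  have hSU : S ⊆ ⋃₀ Γ := subset_sUnion_of_mem hSΓ
  obtain ⟨f, hf, hfU⟩ := exists_injective_adj_mem_sUnion_sdiff hΓ hS.1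
  have hlower : (S \ ⋂₀ Γ).ncard ≤ matchNum (G.induce (⋃₀ Γ)) :=
    ncard_le_matchNum_induce (sdiff_subset.trans hSU) f hf
      (fun x => ⟨(hfU x).1.1, fun hx => (hfU x).1.2 hx.1⟩) fun x => (hfU x).2
  have hupper := matchNum_induce_add_ncard_le hSU hS.1
  have hcore := ncard_sdiff_add_ncard_of_subset (sInter_subset_of_mem hSΓ)
  have hα := hS.2
  omega
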